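/- Assume a : ℝⁿ × ℝ → ℝ is continuous, 0 < α ≤ a ≤ β, and a is ℤⁿ-periodic in x. Let Y = [0,1]ⁿ, Ỹ = [−1,0]ⁿ, and define the enlarged reachable set R_t(Y) := ⋃_{x ∈ Y} R_t(x). Then for all real t ≥ s with s ∈ ℕ, one has R_t(Y) ⊆ R_s(Y) + R_{t−s}(Y, s) + Ỹ, where R_{t−s}(Y, s) := ⋃_{x ∈ Y} R_t(x, s) is the enlarged reachable set at time t starting from Y at initial time s. -/

import Mathlib

open Metric Set MeasureTheory Pointwise

noncomputable section

/-- An admissible path on `[s,t]`: a Lipschitz curve whose a.e. derivative is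
bounded in norm by the velocity `a` along the curve. -/
def Admissible {n : ℕ} (a : EuclideanSpace ℝ (Fin n) → ℝ → ℝ) (s t : ℝ)
    (γ : ℝ → EuclideanSpace ℝ (Fin n)) : Prop :=
  (∃ C : NNReal, LipschitzOnWith C γ (Set.Icc s t)) ∧
  ∀ᵐ r ∂(MeasureTheory.volume.restrict (Set.Ioo s t)),
    ∃ v, HasDerivAt γ v r ∧ ‖v‖ ≤ a (γ r) r

/-- The reachable set at time `t` starting from `x` at time `s`. -/
def Reach {n : ℕ} (a : EuclideanSpace ℝ (Fin n) → ℝ → ℝ) (s t : ℝ)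
    (x : EuclideanSpace ℝ (Fin n)) : Set (EuclideanSpace ℝ (Fin n)) :=
  {y | ∃ γ, Admissible a s t γ ∧ γ s = x ∧ γ t = y}

/-- An integer vector viewed as a point of `ℝⁿ`. -/
def intVec {n : ℕ} (k : Fin n → ℤ) : EuclideanSpace ℝ (Fin n) :=
  WithLp.toLp 2 (fun i => (k i : ℝ))

/-- The unit cube `[0,1]ⁿ`. -/
def unitCube (n : ℕ) : Set (EuclideanSpace ℝ (Fin n)) :=
  {x | ∀ i, x i ∈ Set.Icc (0:ℝ) 1}

/-- The reflected unit cube `[-1,0]ⁿ`. -/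
def negCube (n : ℕ) : Set (EuclideanSpace ℝ (Fin n)) :=
  {x | ∀ i, x i ∈ Set.Icc (-1:ℝ) 0}

/-- The enlarged reachable set at time `t` starting from the unit cube at time `s`. -/
def ReachY {n : ℕ} (a : EuclideanSpace ℝ (Fin n) → ℝ → ℝ) (s t : ℝ) :
    Set (EuclideanSpace ℝ (Fin n)) :=
  ⋃ x ∈ unitCube n, Reach a s t x

/-! Split an admissible path `γ` at time `s` and translate its tail by the integer vector
`⌊γ(s)⌋`: periodicity keeps the translated tail admissible, its start `γ(s) - ⌊γ(s)⌋` lies in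
`[0,1]ⁿ`, and the correction `⌊γ(s)⌋ - γ(s)` lies in `[-1,0]ⁿ`. -/

section

variable {n : ℕ} {a : EuclideanSpace ℝ (Fin n) → ℝ → ℝ}

theorem Admissible.mono {s t s' t' : ℝ} {γ : ℝ → EuclideanSpace ℝ (Fin n)}
    (hγ : Admissible a s t γ) (hs : s ≤ s') (ht : t' ≤ t) : Admissible a s' t' γ := by
  obtain ⟨⟨C, hC⟩, hae⟩ := hγ
  exact ⟨⟨C, hC.mono (Icc_subset_Icc hs ht)⟩,
    ae_mono (Measure.restrict_mono (Ioo_subset_Ioo hs ht) le_rfl) hae⟩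

theorem Admissible.sub_const {s t : ℝ} {γ : ℝ → EuclideanSpace ℝ (Fin n)}
    {c : EuclideanSpace ℝ (Fin n)} (hc : ∀ x r, a (x - c) r = a x r)
    (hγ : Admissible a s t γ) : Admissible a s t (fun r => γ r - c) := by
  obtain ⟨⟨C, hC⟩, hae⟩ := hγ
  refine ⟨⟨C, fun u hu v hv => by simpa only [edist_sub_right] using hC hu hv⟩, ?_⟩
  filter_upwards [hae] with r ⟨v, hv, hva⟩
  exact ⟨v, hv.sub_const c, by rwa [hc]⟩

theorem reach_split {r s t : ℝ} {x y : EuclideanSpace ℝ (Fin n)}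
    (hy : y ∈ Reach a r t x) (hrs : r ≤ s) (hst : s ≤ t) :
    ∃ z ∈ Reach a r s x, y ∈ Reach a s t z := by
  obtain ⟨γ, hγ, hγr, hγt⟩ := hy
  exact ⟨γ s, ⟨γ, hγ.mono le_rfl hst, hγr, rfl⟩, γ, hγ.mono hrs le_rfl, rfl, hγt⟩

theorem sub_const_mem_reach {s t : ℝ} {x y c : EuclideanSpace ℝ (Fin n)}
    (hc : ∀ x r, a (x - c) r = a x r) (hy : y ∈ Reach a s t x) :
    y - c ∈ Reach a s t (x - c) := by
  obtain ⟨γ, hγ, hγs, hγt⟩ := hy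
  exact ⟨fun r => γ r - c, hγ.sub_const hc, congrArg (· - c) hγs, congrArg (· - c) hγt⟩

theorem sub_intVec_floor_mem_unitCube (z : EuclideanSpace ℝ (Fin n)) :
    z - intVec (fun i => ⌊z i⌋) ∈ unitCube n := fun i =>
  ⟨Int.fract_nonneg (z i), (Int.fract_lt_one (z i)).le⟩

theorem intVec_floor_sub_mem_negCube (z : EuclideanSpace ℝ (Fin n)) :
    intVec (fun i => ⌊z i⌋) - z ∈ negCube n := by
  intro i
  have hfract : (intVec (fun i => ⌊z i⌋) - z) i = -Int.fract (z i) := by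
    simp only [PiLp.sub_apply, intVec, Int.fract, neg_sub]
  rw [hfract]
  exact ⟨by linarith [Int.fract_lt_one (z i)], by linarith [Int.fract_nonneg (z i)]⟩

end

theorem reachY_subadd_general {n : ℕ} (a : EuclideanSpace ℝ (Fin n) → ℝ → ℝ)
    (hper : ∀ (x : EuclideanSpace ℝ (Fin n)) (t : ℝ) (k : Fin n → ℤ),
      a (x + intVec k) t = a x t)
    (s : ℕ) (t : ℝ) (hst : (s : ℝ) ≤ t) :
    ReachY a 0 t ⊆ ReachY a 0 s + ReachY a s t + negCube n := by
  intro y hy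
  simp only [ReachY, mem_iUnion] at hy
  obtain ⟨x, hx, hy⟩ := hy
  obtain ⟨z, hz, hyz⟩ := reach_split hy (Nat.cast_nonneg s) hst
  set k : Fin n → ℤ := fun i => ⌊z i⌋
  have hk : ∀ x r, a (x - intVec k) r = a x r := fun x r => by
    rw [← hper (x - intVec k) r k, sub_add_cancel]
  have hz₀ : z ∈ ReachY a 0 s := mem_biUnion hx hz
  have hy₁ : y - intVec k ∈ ReachY a s t :=
    mem_biUnion (sub_intVec_floor_mem_unitCube z) (sub_const_mem_reach hk hyz)
  have hdecomp : y = z + (y - intVec k) + (intVec k - z) := by abel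
  rw [hdecomp]
  exact add_mem_add (add_mem_add hz₀ hy₁) (intVec_floor_sub_mem_negCube z)

theorem reachY_subadd {n : ℕ} (a : EuclideanSpace ℝ (Fin n) → ℝ → ℝ)
    (α β : ℝ) (hα : 0 < α) (hαβ : α ≤ β)
    (hcont : Continuous (fun p : EuclideanSpace ℝ (Fin n) × ℝ => a p.1 p.2))
    (hbd : ∀ x t, α ≤ a x t ∧ a x t ≤ β)
    (hper : ∀ (x : EuclideanSpace ℝ (Fin n)) (t : ℝ) (k : Fin n → ℤ),
      a (x + intVec k) t = a x t)
    (s : ℕ) (t : ℝ) (hst : (s : ℝ) ≤ t) :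
    ReachY a 0 t ⊆ ReachY a 0 s + ReachY a s t + negCube n :=
  reachY_subadd_general a hper s t hst
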